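/- arXiv:math/0609271 — 7 statements merged into one kernel-verified Lean document; each statement's English description precedes it below -/
import Mathlib

section
/- For any n-tuple (z_1,...,z_n) of complex numbers, the maximum over ν = 1,...,2n+1 of the real part of the power sum ∑_{k=1}^n z_k^ν is nonnegative. -/
/-!
Suppose `Re s_ν < 0` for `1 ≤ ν ≤ 2n + 1`. The `2n` numbers `z_k, conj z_k` then have the real,
negative power sums `p_ν = 2 Re s_ν`. Newton's identities for the coefficients
`a_k = (-1)^k e_k` of `∏ (1 - w X)` read `k a_k = ∑_{i < k} a_i (-p_{k-i})`, so by induction every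
`a_k` with `k ≤ 2n + 1` is a positive real. But `a_{2n+1} = 0`, as there are only `2n` numbers.
-/

open Finset MvPolynomial
open scoped ComplexOrder

theorem pos_of_natCast_mul_eq_sum_antidiagonal {R : Type*} [Semiring R] [PartialOrder R]
    [IsStrictOrderedRing R] [PosMulReflectLT R] {a q : ℕ → R} {N : ℕ} (ha₀ : 0 < a 0)
    (hq : ∀ j, 1 ≤ j → j ≤ N → 0 < q j)
    (hrec : ∀ k ≤ N, (k : R) * a k = ∑ x ∈ antidiagonal k with x.1 < k, a x.1 * q x.2) :
    ∀ k ≤ N, 0 < a k := by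
  intro k
  induction k using Nat.strong_induction_on with
  | _ k ih =>
    intro hk
    rcases k with _ | k
    · exact ha₀
    have hsum : 0 < ∑ x ∈ antidiagonal (k + 1) with x.1 < k + 1, a x.1 * q x.2 := by
      refine sum_pos (fun x hx => ?_) ⟨(0, k + 1), by simp⟩
      obtain ⟨hx, hlt⟩ := mem_filter.mp hx
      rw [HasAntidiagonal.mem_antidiagonal] at hx
      exact mul_pos (ih x.1 hlt (by omega)) (hq x.2 (by omega) (by omega))
    rw [← hrec (k + 1) hk] at hsum
    exact pos_of_mul_pos_right hsum (Nat.cast_nonneg _)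

namespace MvPolynomial

theorem esymm_eq_zero_of_card_lt (σ R : Type*) [CommSemiring R] [Fintype σ] {k : ℕ}
    (hk : Fintype.card σ < k) : esymm σ R k = 0 := by
  simp [esymm, powersetCard_eq_empty.mpr hk]

theorem natCast_mul_neg_one_pow_mul_eval_esymm_eq_sum {σ R : Type*} [CommRing R] [Fintype σ]
    (w : σ → R) (k : ℕ) :
    (k : R) * ((-1) ^ k * eval w (esymm σ R k)) =
      ∑ x ∈ antidiagonal k with x.1 < k,
        (-1) ^ x.1 * eval w (esymm σ R x.1) * -∑ i, w i ^ x.2 := by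
  have newton := congrArg (eval w) (mul_esymm_eq_sum σ R k)
  simp only [map_mul, map_pow, map_neg, map_one, map_natCast, map_sum, psum, eval_X] at newton
  rw [← mul_assoc, mul_comm _ ((-1) ^ k), mul_assoc, newton, ← mul_assoc, ← pow_add,
    Odd.neg_one_pow ⟨k, by ring⟩, neg_one_mul, ← sum_neg_distrib]
  simp only [mul_neg]

end MvPolynomial

theorem stmt_0 (n : ℕ) (z : Fin n → ℂ) :
    ∃ ν : ℕ, 1 ≤ ν ∧ ν ≤ 2 * n + 1 ∧ 0 ≤ (∑ k, z k ^ ν).re := by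
  by_contra! hneg
  let w : Fin n ⊕ Fin n → ℂ := Sum.elim z (fun k => starRingEnd ℂ (z k))
  have hpsum : ∀ ν, ∑ i, w i ^ ν = ((2 * (∑ k, z k ^ ν).re : ℝ) : ℂ) := by
    intro ν
    simp only [w, Fintype.sum_sum_type, Sum.elim_inl, Sum.elim_inr, ← map_pow, ← map_sum,
      Complex.add_conj]
  let a : ℕ → ℂ := fun k => (-1) ^ k * eval w (esymm _ ℂ k)
  -- in `ComplexOrder`, `0 < x` says that `x` is a positive real
  have hpos : ∀ k ≤ 2 * n + 1, 0 < a k := by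
    refine pos_of_natCast_mul_eq_sum_antidiagonal (q := fun j => -∑ i, w i ^ j)
      (by simp [a, esymm_zero]) (fun j hj₁ hj₂ => ?_)
      (fun k _ => natCast_mul_neg_one_pow_mul_eval_esymm_eq_sum w k)
    rw [hpsum, ← Complex.ofReal_neg, Complex.zero_lt_real]
    linarith [hneg j hj₁ hj₂]
  have hzero : a (2 * n + 1) = 0 := by
    simp [a, esymm_eq_zero_of_card_lt (Fin n ⊕ Fin n) ℂ (k := 2 * n + 1) (by simp; omega)]
  exact (hpos _ le_rfl).ne' hzero
end

section
/- For any complex numbers z_1,...,z_n with |z_k| ≥ 1 for all k, one has max_{ν=1,...,n²−n+1} |∑_{k=1}^n z_k^ν| ≥ √n. -/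
/-! Suppose `‖∑ₖ zₖ ^ ν‖ < √n` for `ν = 1, …, n² - n + 1`. The `m = n² - n` numbers `zᵢ z̄ⱼ`
(`i ≠ j`) have `ν`-th power sum `‖∑ₖ zₖ ^ ν‖² - ∑ₖ ‖zₖ‖ ^ (2ν)`, a real number that is negative
because the first term is `< n` and the second `≥ n`. By Newton's identities the coefficients `aₖ`
of `∏ (1 - ζ X)` satisfy `k aₖ = -∑ aᵢ pₖ₋ᵢ` with `a₀ = 1`, so negative power sums
`p₁, …, pₘ₊₁` force `aₖ > 0` for `k ≤ m + 1`; but `aₘ₊₁ = 0` since the product has degree `m`. -/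

open Finset MvPolynomial ComplexConjugate
open scoped ComplexOrder

section NewtonRecursion

variable {R : Type*} [CommRing R] [PartialOrder R] [IsStrictOrderedRing R] {a p : ℕ → R}

theorem sum_antidiagonal_mul_neg {k : ℕ} (hk : 0 < k) (ha0 : a 0 = 1)
    (ha : ∀ i < k, 0 ≤ a i) (hp : ∀ ν ∈ Icc 1 k, p ν < 0) :
    ∑ x ∈ antidiagonal k with x.1 < k, a x.1 * p x.2 < 0 := by
  refine sum_neg' (fun x hx => ?_) ⟨(0, k), by simpa using hk, ?_⟩
  · rw [mem_filter, HasAntidiagonal.mem_antidiagonal] at hx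
    exact mul_nonpos_of_nonneg_of_nonpos (ha _ hx.2) (hp _ (mem_Icc.mpr (by omega))).le
  · simpa [ha0] using hp k (mem_Icc.mpr ⟨hk, le_rfl⟩)

theorem pos_of_newton_recursion [PosMulReflectLT R] {N : ℕ}
    (hrec : ∀ k : ℕ, (k : R) * a k = -∑ x ∈ antidiagonal k with x.1 < k, a x.1 * p x.2)
    (ha0 : a 0 = 1) (hp : ∀ ν ∈ Icc 1 N, p ν < 0) {k : ℕ} (hk : k ≤ N) : 0 < a k := by
  induction k using Nat.strong_induction_on with
  | _ k ih =>
    rcases Nat.eq_zero_or_pos k with rfl | hk0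
    · exact ha0 ▸ zero_lt_one
    have hsum := sum_antidiagonal_mul_neg hk0 ha0 (fun i hi => (ih i hi (by omega)).le)
      (fun ν hν => hp ν (Icc_subset_Icc_right hk hν))
    exact pos_of_mul_pos_right (hrec k ▸ neg_pos.mpr hsum) k.cast_nonneg

end NewtonRecursion

theorem MvPolynomial.esymm_eq_zero_of_card_lt_s2 (σ R : Type*) [Fintype σ] [CommSemiring R] {k : ℕ}
    (hk : Fintype.card σ < k) : esymm σ R k = 0 := by
  rw [esymm, powersetCard_eq_empty.mpr (by simpa using hk), sum_empty]

theorem aeval_newton_recursion {σ R : Type*} [Fintype σ] [CommRing R] (ζ : σ → R) (k : ℕ) :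
    (k : R) * ((-1) ^ k * aeval ζ (esymm σ R k)) =
      -∑ x ∈ antidiagonal k with x.1 < k,
        (-1) ^ x.1 * aeval ζ (esymm σ R x.1) * ∑ t, ζ t ^ x.2 := by
  have h := congrArg (aeval ζ) (mul_esymm_eq_sum σ R k)
  simp only [map_mul, map_pow, map_neg, map_one, map_natCast, map_sum, psum, aeval_X] at h
  have hsign : ((-1) ^ k * (-1) ^ (k + 1) : R) = -1 := by
    rw [← pow_add, ← add_assoc, ← two_mul, pow_succ, pow_mul]
    simp
  rw [mul_left_comm, h, ← mul_assoc, hsign, neg_one_mul]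

theorem exists_sum_pow_not_neg {σ R : Type*} [Fintype σ] [CommRing R] [PartialOrder R]
    [IsStrictOrderedRing R] [PosMulReflectLT R] (ζ : σ → R) :
    ∃ ν ∈ Icc 1 (Fintype.card σ + 1), ¬ ∑ t, ζ t ^ ν < 0 := by
  by_contra! hneg
  have hpos := pos_of_newton_recursion (a := fun k => (-1) ^ k * aeval ζ (esymm σ R k))
    (aeval_newton_recursion ζ) (by simp [esymm_zero]) hneg le_rfl
  rw [esymm_eq_zero_of_card_lt_s2 σ R (Nat.lt_succ_self _), map_zero, mul_zero] at hpos
  exact hpos.false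

theorem Complex.sum_offDiag_mul_conj {ι : Type*} [Fintype ι] [DecidableEq ι] (w : ι → ℂ) :
    ∑ p ∈ univ.offDiag, w p.1 * conj (w p.2) = ((‖∑ i, w i‖ ^ 2 - ∑ i, ‖w i‖ ^ 2 : ℝ) : ℂ) := by
  have hsplit := sum_union (disjoint_diag_offDiag univ) (f := fun p => w p.1 * conj (w p.2))
  rw [diag_union_offDiag, univ_product_univ, Fintype.sum_prod_type, sum_diag] at hsplit
  dsimp only at hsplit
  rw [eq_sub_of_add_eq' hsplit.symm, ← sum_mul_sum, ← map_sum]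
  push_cast
  simp only [mul_conj']

theorem sum_offDiag_mul_conj_pow_neg {ι : Type*} [Fintype ι] [DecidableEq ι] (z : ι → ℂ)
    (hz : ∀ i, 1 ≤ ‖z i‖) {ν : ℕ} (hsmall : ‖∑ i, z i ^ ν‖ < √(Fintype.card ι)) :
    ∑ p ∈ univ.offDiag, (z p.1 * conj (z p.2)) ^ ν < 0 := by
  simp_rw [mul_pow, ← map_pow]
  rw [Complex.sum_offDiag_mul_conj (z · ^ ν), ← Complex.ofReal_zero, Complex.real_lt_real]
  have hcard : (Fintype.card ι : ℝ) ≤ ∑ i, ‖z i ^ ν‖ ^ 2 := by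
    rw [← Finset.card_univ, ← nsmul_one, ← sum_const]
    exact sum_le_sum fun i _ => one_le_pow₀ (norm_pow (z i) ν ▸ one_le_pow₀ (hz i))
  have hsq := (Real.lt_sqrt (norm_nonneg _)).mp hsmall
  linarith

theorem stmt_2 (n : ℕ) (z : Fin n → ℂ) (hz : ∀ k, 1 ≤ ‖z k‖) :
    ∃ ν : ℕ, 1 ≤ ν ∧ ν ≤ n ^ 2 - n + 1 ∧
      Real.sqrt n ≤ ‖∑ k, z k ^ ν‖ := by
  by_contra! hsmall
  let s := (univ : Finset (Fin n)).offDiag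
  obtain ⟨ν, hν, hnonneg⟩ := exists_sum_pow_not_neg fun p : s => z p.1.1 * conj (z p.1.2)
  have hcard : Fintype.card s = n ^ 2 - n := by
    rw [Fintype.card_coe, offDiag_card, card_univ, Fintype.card_fin, sq]
  rw [mem_Icc, hcard] at hν
  refine hnonneg ?_
  rw [sum_coe_sort s fun p => (z p.1 * conj (z p.2)) ^ ν]
  exact sum_offDiag_mul_conj_pow_neg z hz (by simpa using hsmall ν hν.1 hν.2)
end

section
/- Let m ≥ n be positive integers and z_1,...,z_n be unimodular complex numbers (|z_k| = 1). Then max_{1 ≤ ν ≤ m} |∑_{k=1}^n z_k^ν| ≥ √(n(1 − (n−1)/m)). -/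
/-!
Let `A` be the `n × (m + 1)` matrix `A j ν = z_j ^ ν`. The Frobenius norms of the Gram matrices
`A Aᴴ` and `Aᴴ A` agree, both being `tr (A Aᴴ A Aᴴ)`. Since `|z_j| = 1`, the diagonal of `A Aᴴ`
is constantly `m + 1`, giving `‖A Aᴴ‖² ≥ n (m + 1)²`, while `(Aᴴ A) μ ν = s_{ν - μ}` for `μ ≤ ν`,
giving `‖Aᴴ A‖² ≤ (m + 1) (n² + m M²)` with `M = max_{1 ≤ ν ≤ m} |s_ν|`. Comparing the two yields
`M² ≥ n (m + 1 - n) / m`.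
-/

open Finset Matrix

namespace Matrix

variable {ι κ 𝕜 : Type*} [Fintype ι] [Fintype κ] [RCLike 𝕜]

theorem trace_mul_conjTranspose_eq_sum_norm_sq (B : Matrix ι κ 𝕜) :
    (B * Bᴴ).trace = ((∑ j, ∑ k, ‖B j k‖ ^ 2 : ℝ) : 𝕜) := by
  simp only [trace, diag_apply, mul_apply, conjTranspose_apply, RCLike.star_def,
    RCLike.mul_conj]
  push_cast
  rfl

theorem sum_norm_sq_mul_conjTranspose_self_eq (A : Matrix ι κ 𝕜) :
    ∑ j, ∑ k, ‖(A * Aᴴ) j k‖ ^ 2 = ∑ μ, ∑ ν, ‖(Aᴴ * A) μ ν‖ ^ 2 := by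
  have key : (A * Aᴴ * (A * Aᴴ)ᴴ).trace = (Aᴴ * A * (Aᴴ * A)ᴴ).trace := by
    simp only [conjTranspose_mul, conjTranspose_conjTranspose, Matrix.mul_assoc]
    rw [trace_mul_comm A, Matrix.mul_assoc, Matrix.mul_assoc]
  simpa only [trace_mul_conjTranspose_eq_sum_norm_sq, RCLike.ofReal_inj] using key

end Matrix

theorem Complex.star_mul_self_of_norm_eq_one {w : ℂ} (hw : ‖w‖ = 1) : star w * w = 1 := by
  rw [Complex.star_def, Complex.conj_mul', hw, Complex.ofReal_one, one_pow]

section PowerMatrix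

variable {ι : Type*} (z : ι → ℂ) (m : ℕ)

def powerMatrix : Matrix ι (Fin (m + 1)) ℂ :=
  Matrix.of fun j ν => z j ^ (ν : ℕ)

variable {z}

theorem powerMatrix_mul_conjTranspose_apply_self (hz : ∀ j, ‖z j‖ = 1) (j : ι) :
    (powerMatrix z m * (powerMatrix z m)ᴴ) j j = m + 1 := by
  simp only [powerMatrix, mul_apply, conjTranspose_apply, of_apply, star_pow, ← mul_pow,
    mul_comm (z j), Complex.star_mul_self_of_norm_eq_one (hz j), one_pow, sum_const, card_univ,
    Fintype.card_fin, nsmul_eq_mul, mul_one]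
  push_cast
  ring

variable [Fintype ι]

theorem conjTranspose_powerMatrix_mul_apply (hz : ∀ j, ‖z j‖ = 1) {μ ν : Fin (m + 1)}
    (h : (μ : ℕ) ≤ ν) :
    ((powerMatrix z m)ᴴ * powerMatrix z m) μ ν = ∑ j, z j ^ ((ν : ℕ) - μ) := by
  rw [mul_apply]
  refine sum_congr rfl fun j _ => ?_
  rw [conjTranspose_apply, powerMatrix, of_apply, of_apply, ← Nat.sub_add_cancel h, pow_add,
    Nat.add_sub_cancel, star_pow, mul_left_comm, ← mul_pow,
    Complex.star_mul_self_of_norm_eq_one (hz j), one_pow, mul_one]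

theorem card_mul_sq_le_sum_norm_sq_powerMatrix_mul_conjTranspose (hz : ∀ j, ‖z j‖ = 1) :
    Fintype.card ι * ((m : ℝ) + 1) ^ 2 ≤
      ∑ j, ∑ k, ‖(powerMatrix z m * (powerMatrix z m)ᴴ) j k‖ ^ 2 := by
  rw [← nsmul_eq_mul, ← card_univ, ← sum_const]
  refine sum_le_sum fun j _ => ?_
  calc ((m : ℝ) + 1) ^ 2
      = ‖(powerMatrix z m * (powerMatrix z m)ᴴ) j j‖ ^ 2 := by
        rw [powerMatrix_mul_conjTranspose_apply_self m hz]
        norm_cast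
    _ ≤ _ := single_le_sum (f := fun k => ‖(powerMatrix z m * (powerMatrix z m)ᴴ) j k‖ ^ 2)
        (fun _ _ => sq_nonneg _) (mem_univ j)

theorem norm_conjTranspose_powerMatrix_mul_apply_le (hz : ∀ j, ‖z j‖ = 1) {M : ℝ}
    (hM : ∀ d ∈ Icc 1 m, ‖∑ j, z j ^ d‖ ≤ M) {μ ν : Fin (m + 1)} (hμν : μ ≠ ν) :
    ‖((powerMatrix z m)ᴴ * powerMatrix z m) μ ν‖ ≤ M := by
  wlog h : μ < ν generalizing μ ν
  · rw [← (isHermitian_conjTranspose_mul_self (powerMatrix z m)).apply, norm_star]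
    exact this hμν.symm (lt_of_le_of_ne (not_lt.1 h) hμν.symm)
  rw [conjTranspose_powerMatrix_mul_apply m hz h.le]
  exact hM _ (mem_Icc.2 ⟨Nat.sub_pos_of_lt h, by omega⟩)

theorem sum_norm_sq_conjTranspose_powerMatrix_mul_le (hz : ∀ j, ‖z j‖ = 1) {M : ℝ}
    (hM : ∀ d ∈ Icc 1 m, ‖∑ j, z j ^ d‖ ≤ M) :
    ∑ μ, ∑ ν, ‖((powerMatrix z m)ᴴ * powerMatrix z m) μ ν‖ ^ 2 ≤
      ((m : ℝ) + 1) * ((Fintype.card ι : ℝ) ^ 2 + m * M ^ 2) := by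
  classical
  calc ∑ μ, ∑ ν, ‖((powerMatrix z m)ᴴ * powerMatrix z m) μ ν‖ ^ 2
      ≤ ∑ _μ : Fin (m + 1), ((Fintype.card ι : ℝ) ^ 2 + m * M ^ 2) := by
        refine sum_le_sum fun μ _ => ?_
        rw [Fintype.sum_eq_add_sum_compl μ, conjTranspose_powerMatrix_mul_apply m hz le_rfl,
          Nat.sub_self]
        simp only [pow_zero, sum_const, card_univ, nsmul_one, Complex.norm_natCast]
        refine add_le_add le_rfl ?_
        have hcard : (({μ}ᶜ : Finset (Fin (m + 1))).card : ℝ) = m := by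
          simp [card_compl]
        rw [← hcard, ← nsmul_eq_mul]
        refine sum_le_card_nsmul _ _ _ fun ν hν => ?_
        have hne : μ ≠ ν := fun h => by simp [h] at hν
        exact pow_le_pow_left₀ (norm_nonneg _)
          (norm_conjTranspose_powerMatrix_mul_apply_le m hz hM hne) 2
    _ = ((m : ℝ) + 1) * ((Fintype.card ι : ℝ) ^ 2 + m * M ^ 2) := by
        rw [sum_const, card_univ, Fintype.card_fin, nsmul_eq_mul]
        push_cast
        ring

theorem card_mul_succ_le_of_forall_norm_sum_pow_le (hz : ∀ j, ‖z j‖ = 1) {M : ℝ}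
    (hM : ∀ d ∈ Icc 1 m, ‖∑ j, z j ^ d‖ ≤ M) :
    Fintype.card ι * ((m : ℝ) + 1) ≤ (Fintype.card ι : ℝ) ^ 2 + m * M ^ 2 := by
  have h := (card_mul_sq_le_sum_norm_sq_powerMatrix_mul_conjTranspose m hz).trans <|
    (sum_norm_sq_mul_conjTranspose_self_eq (powerMatrix z m)).trans_le
      (sum_norm_sq_conjTranspose_powerMatrix_mul_le m hz hM)
  nlinarith

end PowerMatrix

theorem stmt_3 (n m : ℕ) (hn : 1 ≤ n) (hnm : n ≤ m) (z : Fin n → ℂ)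
    (hz : ∀ k, ‖z k‖ = 1) :
    ∃ ν : ℕ, 1 ≤ ν ∧ ν ≤ m ∧
      Real.sqrt ((n : ℝ) * (1 - ((n : ℝ) - 1) / (m : ℝ))) ≤ ‖∑ k, z k ^ ν‖ := by
  obtain ⟨ν, hν, hνmax⟩ := exists_max_image (Icc 1 m) (fun d => ‖∑ k, z k ^ d‖)
    ⟨1, mem_Icc.2 ⟨le_rfl, hn.trans hnm⟩⟩
  obtain ⟨hν₁, hνm⟩ := mem_Icc.1 hν
  refine ⟨ν, hν₁, hνm, Real.sqrt_le_iff.2 ⟨norm_nonneg _, ?_⟩⟩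
  have key := card_mul_succ_le_of_forall_norm_sum_pow_le m hz hνmax
  rw [Fintype.card_fin] at key
  have hm : (0 : ℝ) < m := by exact_mod_cast hn.trans hnm
  rw [show (n : ℝ) * (1 - ((n : ℝ) - 1) / m) = (n * (m + 1) - n ^ 2) / m by field_simp; ring,
    div_le_iff₀ hm]
  linarith
end

section
/- Let p be prime and χ a Dirichlet character mod p of order p−1 (i.e., χ generates the character group). Set z_k = χ(k)·e(k/p) for k = 1,...,p−1. Then for every ν with 1 ≤ ν ≤ (p−1)² + (p−1) − 1, one has |∑_{k=1}^{p−1} z_k^ν| ≤ √p. -/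
/-!
Since `χ k ^ ν = (χ ^ ν) k` and `e (k / p) ^ ν = e (ν k / p)`, the `ν`-th power sum is the Gauss
sum of `χ ^ ν` with respect to the additive character `a ↦ e (ν a / p)`. Over `𝔽_p` such a Gauss
sum has absolute value `√p` (nontrivial character, nontrivial shift), `0` (nontrivial character,
shift `0`) or `1` (trivial character, nontrivial shift). The remaining case, `χ ^ ν = 1` and
`p ∣ ν`, means `p (p - 1) ∣ ν`, which is excluded by `0 < ν < p (p - 1)`.
-/

noncomputable def e (x : ℝ) : ℂ := Complex.exp (2 * Real.pi * Complex.I * x)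

open Finset

lemma MulChar.norm_apply_unit {R : Type*} [CommRing R] [Finite Rˣ] (χ : MulChar R ℂ) (a : Rˣ) :
    ‖χ a‖ = 1 := by
  cases nonempty_fintype Rˣ
  simpa using Complex.norm_eq_one_of_mem_rootsOfUnity (χ.apply_mem_rootsOfUnity a)

lemma norm_gaussSum_mulShift {R : Type*} [CommRing R] [Fintype R] (χ : MulChar R ℂ)
    (ψ : AddChar R ℂ) (a : Rˣ) : ‖gaussSum χ (ψ.mulShift a)‖ = ‖gaussSum χ ψ‖ := by
  rw [← gaussSum_mulShift χ ψ a, norm_mul, χ.norm_apply_unit, one_mul]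

section FiniteField

variable {F : Type*} [Field F] [Fintype F] {χ : MulChar F ℂ} {ψ : AddChar F ℂ}

lemma norm_gaussSum_eq_sqrt_card (hχ : χ ≠ 1) (hψ : ψ.IsPrimitive) :
    ‖gaussSum χ ψ‖ = √(Fintype.card F) := by
  have h := gaussSum_mul_gaussSum_eq_card hχ hψ
  rw [← star_gaussSum_eq, RCLike.star_def, Complex.mul_conj, Complex.normSq_eq_norm_sq] at h
  rw [eq_comm, Real.sqrt_eq_iff_eq_sq (by positivity) (norm_nonneg _)]
  exact_mod_cast h.symm

lemma norm_gaussSum_mulShift_le_sqrt_card (hψ : ψ.IsPrimitive) {b : F} (h : χ ≠ 1 ∨ b ≠ 0) :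
    ‖gaussSum χ (ψ.mulShift b)‖ ≤ √(Fintype.card F) := by
  rcases eq_or_ne b 0 with rfl | hb
  · rw [AddChar.mulShift_zero, gaussSum_one_right (h.resolve_right (not_not.mpr rfl)), norm_zero]
    positivity
  rcases eq_or_ne χ 1 with rfl | hχ
  · rw [gaussSum_one_left (hψ hb), norm_neg, norm_one, Real.one_le_sqrt]
    exact_mod_cast Fintype.card_pos
  · rw [← Units.val_mk0 hb, norm_gaussSum_mulShift, norm_gaussSum_eq_sqrt_card hχ hψ]

end FiniteField

section PowerSums

variable {p : ℕ} [NeZero p]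

lemma e_natCast_div_eq_stdAddChar (k : ℕ) : e ((k : ℝ) / p) = ZMod.stdAddChar (k : ZMod p) := by
  rw [ZMod.stdAddChar_apply, ZMod.toCircle_natCast, e]
  push_cast
  ring_nf

lemma ZMod.sum_eq_sum_Icc_of_map_zero {M : Type*} [AddCommMonoid M] {f : ZMod p → M}
    (hf : f 0 = 0) : ∑ a, f a = ∑ k ∈ Icc 1 (p - 1), f k := by
  have hrange : range p = insert 0 (Icc 1 (p - 1)) := by
    ext k
    simp only [mem_range, mem_insert, mem_Icc]
    have := NeZero.pos p
    omega
  calc ∑ a, f a = ∑ k ∈ range p, f k :=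
        sum_nbij' ZMod.val (fun k => (k : ZMod p)) (fun a _ => mem_range.mpr (ZMod.val_lt a))
          (fun _ _ => mem_univ _) (fun a _ => ZMod.natCast_zmod_val a)
          (fun k hk => ZMod.val_cast_of_lt (mem_range.mp hk))
          (fun a _ => by rw [ZMod.natCast_zmod_val])
    _ = ∑ k ∈ Icc 1 (p - 1), f k := by
        rw [hrange, sum_insert (by simp), Nat.cast_zero, hf, zero_add]

lemma sum_Icc_pow_eq_gaussSum_mulShift (hp : p ≠ 1) (χ : DirichletCharacter ℂ p) {ν : ℕ}
    (hν : ν ≠ 0) :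
    ∑ k ∈ Icc 1 (p - 1), (χ k * e ((k : ℝ) / p)) ^ ν
      = gaussSum (χ ^ ν) (ZMod.stdAddChar.mulShift (ν : ZMod p)) := by
  have : Nontrivial (ZMod p) := ZMod.nontrivial_iff.mpr hp
  rw [gaussSum, ZMod.sum_eq_sum_Icc_of_map_zero]
  · refine sum_congr rfl fun k _ => ?_
    rw [mul_pow, e_natCast_div_eq_stdAddChar, ← AddChar.map_nsmul_eq_pow,
      MulChar.pow_apply' χ hν, AddChar.mulShift_apply, nsmul_eq_mul]
  · rw [MulChar.map_nonunit _ not_isUnit_zero, zero_mul]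

end PowerSums

lemma pow_ne_one_or_natCast_ne_zero {G : Type*} [Monoid G] {p : ℕ} (hp : p.Prime) {g : G}
    (hg : orderOf g = p - 1) {ν : ℕ} (hν : 0 < ν) (hνp : ν < p * (p - 1)) :
    g ^ ν ≠ 1 ∨ (ν : ZMod p) ≠ 0 := by
  rw [← not_and_or, ZMod.natCast_eq_zero_iff, ← orderOf_dvd_iff_pow_eq_one, hg]
  rintro ⟨hdvd, hpdvd⟩
  have hcop : p.Coprime (p - 1) :=
    (Nat.coprime_self_sub_right hp.one_le).mpr (Nat.coprime_one_right p)
  exact (Nat.le_of_dvd hν (hcop.mul_dvd_of_dvd_of_dvd hpdvd hdvd)).not_gt hνp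

theorem stmt_6 (p : ℕ) (hp : p.Prime) (χ : DirichletCharacter ℂ p)
    (hχ : orderOf χ = p - 1) :
    ∀ ν : ℕ, 1 ≤ ν → ν ≤ (p - 1) ^ 2 + (p - 1) - 1 →
      ‖∑ k ∈ Finset.Icc 1 (p - 1), (χ k * e ((k : ℝ) / (p : ℝ))) ^ ν‖ ≤ Real.sqrt p := by
  intro ν hν hνp
  have : Fact p.Prime := ⟨hp⟩
  have hν_lt : ν < p * (p - 1) := by
    have : p * (p - 1) = (p - 1) ^ 2 + (p - 1) := by
      nth_rewrite 1 [← Nat.sub_add_cancel hp.one_le]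
      ring
    omega
  rw [sum_Icc_pow_eq_gaussSum_mulShift hp.ne_one χ (by omega)]
  exact (norm_gaussSum_mulShift_le_sqrt_card (ZMod.isPrimitive_stdAddChar p)
    (pow_ne_one_or_natCast_ne_zero hp hχ hν hν_lt)).trans_eq (by rw [ZMod.card])
end

section
/- Fix m ≥ 1. Let z_1,...,z_n be unimodular complex numbers, and let M : ℤ → ℝ satisfy √n ≤ M(k) and |∑_{j=1}^n z_j^k| ≤ M(k) for all integers k. Then there is a constant C_m (depending only on m) such that |S(ν_1,...,ν_m)| ≤ C_m · M(ν_1)···M(ν_m) for all integers ν_1,...,ν_m, where S(ν_1,...,ν_m) = ∑ over pairwise distinct k_1,...,k_m in {1,...,n} of z_{k_1}^{ν_1}···z_{k_m}^{ν_m}. -/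
/-- The power sum over tuples of pairwise distinct indices,
encoded as a sum over injections `Fin m ↪ Fin n`. -/
noncomputable def distinctPowerSum (n : ℕ) (z : Fin n → ℂ) (m : ℕ) (ν : Fin m → ℤ) : ℂ :=
  ∑ f : Fin m ↪ Fin n, ∏ j, z (f j) ^ ν j

def embEquiv (n m : ℕ) : (Fin (m+1) ↪ Fin n) ≃ Σ f : Fin m ↪ Fin n, ↥(Set.range f)ᶜ :=
  (Equiv.embeddingCongr (finSuccEquivLast) (Equiv.refl _)).trans
    (Function.Embedding.optionEmbeddingEquiv _ _)

lemma embEquiv_castSucc {n m : ℕ} (p : Σ f : Fin m ↪ Fin n, ↥(Set.range f)ᶜ) (i : Fin m) :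
    ((embEquiv n m).symm p) (Fin.castSucc i) = p.1 i := by
  simp [embEquiv, Function.Embedding.optionEmbeddingEquiv]

lemma embEquiv_last {n m : ℕ} (p : Σ f : Fin m ↪ Fin n, ↥(Set.range f)ᶜ) :
    ((embEquiv n m).symm p) (Fin.last m) = p.2 := by
  simp [embEquiv, Function.Embedding.optionEmbeddingEquiv]

lemma key {n m : ℕ} (z : Fin n → ℂ) (hz : ∀ j, z j ≠ 0) (ν : Fin m → ℤ) (k : ℤ) :
    distinctPowerSum n z m ν * (∑ j, z j ^ k) =
      distinctPowerSum n z (m+1) (Fin.snoc ν k)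
      + ∑ i : Fin m, distinctPowerSum n z m (Function.update ν i (ν i + k)) := by
  classical
  have hS : distinctPowerSum n z (m+1) (Fin.snoc ν k)
      = ∑ f : Fin m ↪ Fin n, ∑ j ∈ (Finset.univ.image f)ᶜ,
          (∏ i, z (f i) ^ ν i) * z j ^ k := by
    rw [distinctPowerSum, ← (embEquiv n m).symm.sum_comp]
    rw [← Finset.univ_sigma_univ, Finset.sum_sigma]
    refine Finset.sum_congr rfl fun f _ => ?_
    have key1 : ∀ j : ↥(Set.range (⇑f))ᶜ,
        ∏ i, z ((embEquiv n m).symm ⟨f, j⟩ i) ^ (Fin.snoc ν k : Fin (m+1) → ℤ) i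
        = (∏ i, z (f i) ^ ν i) * z j ^ k := by
      intro j
      rw [Fin.prod_univ_castSucc]
      congr 1
      · refine Finset.prod_congr rfl fun i _ => ?_
        rw [embEquiv_castSucc ⟨f, j⟩ i, Fin.snoc_castSucc]
      · rw [embEquiv_last ⟨f, j⟩, Fin.snoc_last]
    rw [Finset.sum_congr rfl fun j _ => key1 j]
    refine (Finset.sum_subtype ((Finset.univ.image ⇑f)ᶜ) (fun x => ?_)
      (fun j => (∏ i, z (f i) ^ ν i) * z j ^ k)).symm
    simp
  have hM : ∀ f : Fin m ↪ Fin n,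
      ∑ j ∈ Finset.univ.image f, (∏ i, z (f i) ^ ν i) * z j ^ k
      = ∑ i : Fin m, ∏ i', z (f i') ^ (Function.update ν i (ν i + k) i') := by
    intro f
    rw [Finset.sum_image (fun a _ b _ h => f.injective h)]
    refine Finset.sum_congr rfl fun i _ => ?_
    have h1 : ∀ i' : Fin m, z (f i') ^ Function.update ν i (ν i + k) i'
        = Function.update (fun i' => z (f i') ^ ν i') i (z (f i) ^ (ν i + k)) i' := fun i' =>
      Function.apply_update (fun i' t => z (f i') ^ t) ν i (ν i + k) i'
    rw [Finset.prod_congr rfl fun i' _ => h1 i', Finset.prod_update_of_mem (Finset.mem_univ i),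
      Finset.prod_eq_prod_diff_singleton_mul (Finset.mem_univ i) (fun i' => z (f i') ^ ν i'),
      zpow_add₀ (hz (f i))]
    ring
  rw [hS, distinctPowerSum, Finset.sum_mul]
  have split : ∀ f : Fin m ↪ Fin n, (∏ i, z (f i) ^ ν i) * ∑ j, z j ^ k
      = (∑ j ∈ (Finset.univ.image f)ᶜ, (∏ i, z (f i) ^ ν i) * z j ^ k)
        + ∑ i : Fin m, ∏ i', z (f i') ^ (Function.update ν i (ν i + k) i') := by
    intro f
    rw [Finset.mul_sum, ← hM f, Finset.sum_compl_add_sum (Finset.univ.image ⇑f)]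
  rw [Finset.sum_congr rfl fun f _ => split f, Finset.sum_add_distrib]
  congr 1
  rw [Finset.sum_comm]
  exact Finset.sum_congr rfl fun i _ => rfl

lemma trivial_bound {n : ℕ} (z : Fin n → ℂ) (hz : ∀ j, ‖z j‖ = 1) (k : ℤ) :
    ‖∑ j, z j ^ k‖ ≤ (n : ℝ) := by
  calc ‖∑ j, z j ^ k‖ ≤ ∑ j : Fin n, ‖z j ^ k‖ := norm_sum_le _ _
  _ = ∑ j : Fin n, (1 : ℝ) := by
      refine Finset.sum_congr rfl fun j _ => ?_
      rw [norm_zpow, hz j, one_zpow]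
  _ = n := by simp

theorem main (m : ℕ) :
    ∃ C : ℝ, 0 ≤ C ∧ ∀ (n : ℕ) (z : Fin n → ℂ), (∀ k, ‖z k‖ = 1) →
      ∀ M : ℤ → ℝ, (∀ k : ℤ, Real.sqrt n ≤ M k) →
        (∀ k : ℤ, ‖∑ j, z j ^ k‖ ≤ M k) →
        ∀ ν : Fin m → ℤ, ‖distinctPowerSum n z m ν‖ ≤ C * ∏ i, M (ν i) := by
  induction m with
  | zero =>
    refine ⟨1, zero_le_one, fun n z hz M hM1 hM2 ν => ?_⟩
    simp [distinctPowerSum]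
  | succ m ih =>
    obtain ⟨C, hC0, hC⟩ := ih
    refine ⟨C * (m + 1), by positivity, fun n z hz M hM1 hM2 ν => ?_⟩
    have hzne : ∀ j, z j ≠ 0 := fun j => by
      intro h; have := hz j; rw [h, norm_zero] at this; norm_num at this
    have hM0 : ∀ k, 0 ≤ M k := fun k => le_trans (Real.sqrt_nonneg _) (hM1 k)
    set M' : ℤ → ℝ := fun k => max (Real.sqrt n) ‖∑ j, z j ^ k‖ with hM'def
    have hM'1 : ∀ k : ℤ, Real.sqrt n ≤ M' k := fun k => le_max_left _ _
    have hM'2 : ∀ k : ℤ, ‖∑ j, z j ^ k‖ ≤ M' k := fun k => le_max_right _ _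
    have hM'le : ∀ k, M' k ≤ M k := fun k => max_le (hM1 k) (hM2 k)
    have hsn : Real.sqrt (n : ℝ) ≤ (n : ℝ) := by
      have h2 : Real.sqrt (n:ℝ) ≤ Real.sqrt ((n:ℝ)^2) :=
        Real.sqrt_le_sqrt (by exact_mod_cast Nat.le_self_pow two_ne_zero n)
      rwa [Real.sqrt_sq (by positivity)] at h2
    have hM'n : ∀ k, M' k ≤ (n : ℝ) := fun k => max_le hsn (trivial_bound z hz k)
    have hM'0 : ∀ k, 0 ≤ M' k := fun k => le_trans (Real.sqrt_nonneg _) (hM'1 k)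
    set ν₀ : Fin m → ℤ := Fin.init ν with hν₀
    set kk : ℤ := ν (Fin.last m) with hkk
    have hν : ν = Fin.snoc ν₀ kk := (Fin.snoc_init_self ν).symm
    have hkey := key z hzne ν₀ kk
    have heq : distinctPowerSum n z (m+1) ν
        = distinctPowerSum n z m ν₀ * (∑ j, z j ^ kk)
          - ∑ i : Fin m, distinctPowerSum n z m (Function.update ν₀ i (ν₀ i + kk)) := by
      rw [hν, hkey]; ring
    -- product decomposition of the target
    have hprod : ∏ i, M (ν i) = (∏ i : Fin m, M (ν₀ i)) * M kk := by
      rw [Fin.prod_univ_castSucc]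
      rfl
    -- bound each merged term
    have hmerged : ∀ i : Fin m,
        ‖distinctPowerSum n z m (Function.update ν₀ i (ν₀ i + kk))‖
          ≤ C * ((∏ i' : Fin m, M (ν₀ i')) * M kk) := by
      intro i
      refine le_trans (hC n z hz M' hM'1 hM'2 _) ?_
      have h1 : ∀ i' : Fin m, M' (Function.update ν₀ i (ν₀ i + kk) i')
          = Function.update (fun i' => M' (ν₀ i')) i (M' (ν₀ i + kk)) i' := fun i' =>
        Function.apply_update (fun _ t => M' t) ν₀ i (ν₀ i + kk) i'
      rw [Finset.prod_congr rfl fun i' _ => h1 i',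
        Finset.prod_update_of_mem (Finset.mem_univ i)]
      have h2 : M' (ν₀ i + kk) ≤ M (ν₀ i) * M kk := by
        refine le_trans (hM'n _) ?_
        have : (n : ℝ) = Real.sqrt n * Real.sqrt n := (Real.mul_self_sqrt (by positivity)).symm
        rw [this]
        exact mul_le_mul (hM1 _) (hM1 _) (Real.sqrt_nonneg _) (hM0 _)
      have h3 : ∏ i' ∈ Finset.univ \ {i}, M' (ν₀ i') ≤ ∏ i' ∈ Finset.univ \ {i}, M (ν₀ i') :=
        Finset.prod_le_prod (fun i' _ => hM'0 _) (fun i' _ => hM'le _)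
      have h4 : M' (ν₀ i + kk) * ∏ i' ∈ Finset.univ \ {i}, M' (ν₀ i')
          ≤ (M (ν₀ i) * M kk) * ∏ i' ∈ Finset.univ \ {i}, M (ν₀ i') := by
        refine mul_le_mul h2 h3 (Finset.prod_nonneg fun i' _ => hM'0 _)
          (mul_nonneg (hM0 _) (hM0 _))
      refine le_trans (mul_le_mul_of_nonneg_left h4 hC0) ?_
      rw [Finset.prod_eq_prod_diff_singleton_mul (Finset.mem_univ i) (fun i' => M (ν₀ i'))]
      apply le_of_eq; ring
    have hfirst : ‖distinctPowerSum n z m ν₀ * (∑ j, z j ^ kk)‖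
        ≤ C * ((∏ i' : Fin m, M (ν₀ i')) * M kk) := by
      rw [norm_mul]
      have := mul_le_mul (hC n z hz M hM1 hM2 ν₀) (hM2 kk) (norm_nonneg _)
        (mul_nonneg hC0 (Finset.prod_nonneg fun i' _ => hM0 _))
      linarith [this]
    rw [heq, hprod]
    refine le_trans (norm_sub_le _ _) ?_
    refine le_trans (add_le_add hfirst (le_trans (norm_sum_le _ _)
      (Finset.sum_le_sum fun i _ => hmerged i))) ?_
    rw [Finset.sum_const, Finset.card_univ, Fintype.card_fin, nsmul_eq_mul]
    apply le_of_eq; push_cast; ring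

theorem stmt_13 (m : ℕ) (hm : 1 ≤ m) :
    ∃ C : ℝ, ∀ (n : ℕ) (z : Fin n → ℂ), (∀ k, ‖z k‖ = 1) →
      ∀ M : ℤ → ℝ, (∀ k : ℤ, Real.sqrt n ≤ M k) →
        (∀ k : ℤ, ‖∑ j, z j ^ k‖ ≤ M k) →
        ∀ ν : Fin m → ℤ, ‖distinctPowerSum n z m ν‖ ≤ C * ∏ i, M (ν i) := by
  obtain ⟨C, _, hC⟩ := main m
  exact ⟨C, hC⟩
end

section
/- Let ε > 0, α > 0, 0 < θ < 1, C₁ ≥ 1. Suppose (z_1,...,z_n) are unimodular complex numbers with |∑_{k=1}^n z_k^ν| ≤ C₁√n for all ν = 1,...,⌊αn²⌋, and let m ~ n^θ. Then there exists a subset M₀ ⊆ {1,...,n} with |M₀| = m such that |∑_{k∈M₀} z_k^ν| ≪_ε m^{1/2+ε} for all ν = 1,...,⌊αn²⌋. -/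
/-!
Choose `S ⊆ ι` by independent Bernoulli(`p`) trials, `p = m / n`. For weights `|w k| ≤ 1` the
centered sum `X = ∑ k, (𝟙[k ∈ S] - p) * w k` has `2N`-th moment at most
`(N + 1) N^(2N) (2m)^N`: expanding `|X|^(2N)` over maps `τ : Fin N ⊕ Fin N → ι`, independence
factors the expectation over the fibres of `τ`, the first centered moment vanishes, so only maps
with all fibres of size `≥ 2`, hence at most `N` distinct values, contribute. Averaging over
`ν = 0, …, ⌊αn²⌋` yields one `S` with every `|X_ν| ≪ (n² m^N)^(1/2N) ≪ m^(1/2+ε)` once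
`N ≫ 1/(θε)`. Since `∑ k ∈ S, z k ^ ν = X_ν + p ∑ k, z k ^ ν` and `p C₁ √n ≤ C₁ √m`, this bounds
the sums over `S`; the case `ν = 0` shows `|#S - m|` is of the same size, so trimming or padding
`S` to exactly `m` elements costs no more.
-/

open Finset Filter

section Bernoulli

variable {ι R : Type*} [Fintype ι] [DecidableEq ι] [CommRing R]

def bernoulliWeight (p : R) (S : Finset ι) : R :=
  ∏ k, if k ∈ S then p else 1 - p

theorem sum_prod_ite_mem (f g : ι → R) :
    ∑ S : Finset ι, ∏ k, (if k ∈ S then f k else g k) = ∏ k, (f k + g k) := by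
  rw [Fintype.prod_add]
  refine sum_congr rfl fun S _ => ?_
  rw [prod_ite]
  congr 2 <;> ext <;> simp

theorem sum_bernoulliWeight_mul_prod (p : R) (f g : ι → R) :
    ∑ S, bernoulliWeight p S * ∏ k, (if k ∈ S then f k else g k) =
      ∏ k, (p * f k + (1 - p) * g k) := by
  simp_rw [bernoulliWeight, ← prod_mul_distrib, ite_mul_ite]
  exact sum_prod_ite_mem _ _

theorem sum_bernoulliWeight (p : R) : ∑ S : Finset ι, bernoulliWeight p S = 1 := by
  simpa using sum_bernoulliWeight_mul_prod p (fun _ : ι => (1 : R)) (fun _ => 1)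

theorem bernoulliWeight_pos {p : ℝ} (hp0 : 0 < p) (hp1 : p < 1) (S : Finset ι) :
    0 < bernoulliWeight p S :=
  prod_pos fun k _ => by split_ifs <;> linarith

theorem Complex.ofReal_bernoulliWeight (p : ℝ) (S : Finset ι) :
    ((bernoulliWeight p S : ℝ) : ℂ) = bernoulliWeight (p : ℂ) S := by
  simp [bernoulliWeight, apply_ite]

theorem exists_le_of_sum_bernoulliWeight_mul_le {p : ℝ} (hp0 : 0 < p) (hp1 : p < 1)
    {f : Finset ι → ℝ} {B : ℝ} (h : ∑ S, bernoulliWeight p S * f S ≤ B) : ∃ S, f S ≤ B := by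
  rw [← mul_one B, ← sum_bernoulliWeight (ι := ι) p, mul_sum] at h
  simp_rw [mul_comm B] at h
  obtain ⟨S, -, hS⟩ := exists_le_of_sum_le univ_nonempty h
  exact ⟨S, le_of_mul_le_mul_left hS (bernoulliWeight_pos hp0 hp1 S)⟩

end Bernoulli

section CenteredMoment

variable {R : Type*} [CommRing R]

/-- The `a`-th moment of `𝟙[k ∈ S] - p` when `k ∈ S` with probability `p`. -/
def centeredMoment (p : R) (a : ℕ) : R :=
  p * (1 - p) ^ a + (1 - p) * (-p) ^ a

theorem centeredMoment_zero (p : R) : centeredMoment p 0 = 1 := by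
  simp [centeredMoment]

theorem centeredMoment_one (p : R) : centeredMoment p 1 = 0 := by
  simp only [centeredMoment]
  ring

theorem Complex.ofReal_centeredMoment (p : ℝ) (a : ℕ) :
    ((centeredMoment p a : ℝ) : ℂ) = centeredMoment (p : ℂ) a := by
  simp [centeredMoment]

theorem abs_centeredMoment_le {p : ℝ} (hp0 : 0 ≤ p) (hp1 : p ≤ 1) {a : ℕ} (ha : a ≠ 0) :
    |centeredMoment p a| ≤ 2 * p := by
  have hq : 0 ≤ 1 - p := sub_nonneg.2 hp1
  calc |centeredMoment p a| ≤ p * (1 - p) ^ a + (1 - p) * p ^ a := by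
        simpa [centeredMoment, abs_mul, abs_of_nonneg hp0, abs_of_nonneg hq] using
          abs_add_le (p * (1 - p) ^ a) ((1 - p) * (-p) ^ a)
    _ ≤ p * 1 + 1 * p := by
        gcongr
        · exact pow_le_one₀ hq (by linarith)
        · linarith
        · exact pow_le_of_le_one hp0 hp1 ha
    _ = 2 * p := by ring

variable {ι α : Type*} [Fintype ι] [DecidableEq ι] [Fintype α]

theorem sum_bernoulliWeight_mul_prod_sub (p : R) (τ : α → ι) :
    ∑ S, bernoulliWeight p S * ∏ i, ((if τ i ∈ S then 1 else 0) - p) =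
      ∏ j, centeredMoment p #{i | τ i = j} := by
  have fiber (S : Finset ι) : ∏ i, ((if τ i ∈ S then 1 else 0) - p) =
      ∏ j, if j ∈ S then (1 - p) ^ #{i | τ i = j} else (-p) ^ #{i | τ i = j} := by
    rw [← prod_fiberwise univ τ]
    refine prod_congr rfl fun j _ => ?_
    rw [prod_congr rfl fun i hi => by rw [(mem_filter.1 hi).2], prod_const]
    split_ifs <;> simp
  simp_rw [fiber]
  exact sum_bernoulliWeight_mul_prod p _ _

end CenteredMoment

section Counting

variable {ι α : Type*} [Fintype ι] [DecidableEq ι] [Fintype α]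

theorem prod_abs_centeredMoment_card_fiber_le {p : ℝ} (hp0 : 0 ≤ p) (hp1 : p ≤ 1) {N : ℕ}
    (hα : Fintype.card α = 2 * N) (τ : α → ι) :
    ∏ j, |centeredMoment p #{i | τ i = j}| ≤
      if #(univ.image τ) ≤ N then (2 * p) ^ #(univ.image τ) else 0 := by
  set s := univ.image τ
  have outside : ∏ j, |centeredMoment p #{i | τ i = j}| =
      ∏ j ∈ s, |centeredMoment p #{i | τ i = j}| := by
    refine (prod_subset (subset_univ s) fun j _ hj => ?_).symm
    simp only [s, mem_image, mem_univ, true_and, not_exists] at hj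
    simp [filter_false_of_mem, hj, centeredMoment_zero]
  rw [outside]
  by_cases hone : ∃ j ∈ s, #{i | τ i = j} = 1
  · obtain ⟨j, hj, h1⟩ := hone
    rw [prod_eq_zero hj (by rw [h1, centeredMoment_one, abs_zero])]
    split_ifs <;> positivity
  push Not at hone
  have two_le : ∀ j ∈ s, 2 ≤ #{i | τ i = j} := fun j hj => by
    obtain ⟨i, -, rfl⟩ := mem_image.1 hj
    have : 0 < #{i' | τ i' = τ i} := card_pos.2 ⟨i, by simp⟩
    have := hone _ hj
    omega
  have hs : #s ≤ N := by
    have : 2 * #s ≤ 2 * N := calc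
      2 * #s = ∑ j ∈ s, 2 := by rw [sum_const, smul_eq_mul, mul_comm]
      _ ≤ ∑ j ∈ s, #{i | τ i = j} := sum_le_sum two_le
      _ = 2 * N := by rw [← card_eq_sum_card_image, card_univ, hα]
    omega
  rw [if_pos hs, ← prod_const]
  exact prod_le_prod (fun _ _ => abs_nonneg _) fun j hj =>
    abs_centeredMoment_le hp0 hp1 (by have := two_le j hj; omega)

variable [DecidableEq α]

theorem card_filter_image_eq_le (s : Finset ι) :
    #{τ : α → ι | univ.image τ = s} ≤ #s ^ Fintype.card α := by
  calc #{τ : α → ι | univ.image τ = s} ≤ #(Fintype.piFinset fun _ : α => s) :=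
        card_le_card fun τ hτ => Fintype.mem_piFinset.2 fun i =>
          (mem_filter.1 hτ).2 ▸ mem_image_of_mem τ (mem_univ i)
    _ = #s ^ Fintype.card α := by simp [Fintype.card_piFinset]

theorem sum_ite_card_image_le {q : ℝ} (hq : 0 ≤ q) (hqn : 1 ≤ q * Fintype.card ι) (N : ℕ) :
    ∑ τ : α → ι, (if #(univ.image τ) ≤ N then q ^ #(univ.image τ) else 0) ≤
      (N + 1) * N ^ Fintype.card α * (q * Fintype.card ι) ^ N := by
  set n := Fintype.card ι
  set f : ℕ → ℝ := fun d => if d ≤ N then q ^ d else 0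
  have hf (d : ℕ) : 0 ≤ f d := by positivity
  have term (d : ℕ) (hd : d ≤ N) :
      n.choose d * ((d : ℝ) ^ Fintype.card α * f d) ≤ N ^ Fintype.card α * (q * n) ^ N := by
    have hchoose : (n.choose d : ℝ) ≤ (n : ℝ) ^ d := by exact_mod_cast Nat.choose_le_pow n d
    calc n.choose d * ((d : ℝ) ^ Fintype.card α * f d)
        ≤ (n : ℝ) ^ d * ((N : ℝ) ^ Fintype.card α * q ^ d) := by
          simp only [f, if_pos hd]
          gcongr
      _ = N ^ Fintype.card α * (q * n) ^ d := by ring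
      _ ≤ N ^ Fintype.card α * (q * n) ^ N := by gcongr
  calc ∑ τ : α → ι, f #(univ.image τ)
      = ∑ s : Finset ι, #{τ : α → ι | univ.image τ = s} * f #s := by
        rw [← sum_fiberwise univ fun τ : α → ι => univ.image τ]
        refine sum_congr rfl fun s _ => ?_
        rw [sum_congr rfl fun τ hτ => by rw [(mem_filter.1 hτ).2], sum_const, nsmul_eq_mul]
    _ ≤ ∑ s : Finset ι, (#s : ℝ) ^ Fintype.card α * f #s := by
        gcongr with s
        exact_mod_cast card_filter_image_eq_le s
    _ = ∑ d ∈ range (n + 1), n.choose d * ((d : ℝ) ^ Fintype.card α * f d) := by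
        rw [← powerset_univ, sum_powerset_apply_card (fun d => (d : ℝ) ^ Fintype.card α * f d)]
        simp [n, nsmul_eq_mul]
    _ = ∑ d ∈ range (n + 1) with d ≤ N, n.choose d * ((d : ℝ) ^ Fintype.card α * f d) := by
        refine (sum_filter_of_ne fun d _ h => ?_).symm
        by_contra hd
        simp [f, hd] at h
    _ ≤ ∑ d ∈ range (N + 1), (N : ℝ) ^ Fintype.card α * (q * n) ^ N := by
        refine sum_le_sum_of_subset_of_nonneg (fun d hd => ?_) (fun _ _ _ => by positivity) |>.trans
          (sum_le_sum fun d hd => term d (Nat.lt_succ_iff.1 (mem_range.1 hd)))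
        exact mem_range.2 (Nat.lt_succ_of_le (mem_filter.1 hd).2)
    _ = (N + 1) * N ^ Fintype.card α * (q * n) ^ N := by
        rw [sum_const, card_range, nsmul_eq_mul]
        push_cast
        ring

end Counting

section Moment

def momentBound (N : ℕ) (x : ℝ) : ℝ :=
  (N + 1) * N ^ (2 * N) * x ^ N

variable {ι : Type*} [Fintype ι] [DecidableEq ι]

def centeredSum (p : ℝ) (w : ι → ℂ) (S : Finset ι) : ℂ :=
  ∑ k, ((if k ∈ S then 1 else 0) - (p : ℂ)) * w k

theorem centeredSum_eq (p : ℝ) (w : ι → ℂ) (S : Finset ι) :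
    centeredSum p w S = ∑ k ∈ S, w k - p * ∑ k, w k := by
  simp [centeredSum, sub_mul, sum_sub_distrib, mul_sum, ite_mul, sum_ite_mem]

theorem ofReal_norm_centeredSum_pow (p : ℝ) (w : ι → ℂ) (S : Finset ι) (N : ℕ) :
    ((‖centeredSum p w S‖ ^ (2 * N) : ℝ) : ℂ) =
      ∑ τ : Fin N ⊕ Fin N → ι, (∏ i, Sum.elim (fun _ => w) (fun _ => star w) i (τ i)) *
        ∏ i, ((if τ i ∈ S then 1 else 0) - (p : ℂ)) := by
  have hconj : (starRingEnd ℂ) (centeredSum p w S) =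
      ∑ k, ((if k ∈ S then 1 else 0) - (p : ℂ)) * star w k := by
    simp [centeredSum, apply_ite]
  calc ((‖centeredSum p w S‖ ^ (2 * N) : ℝ) : ℂ)
      = centeredSum p w S ^ N * (starRingEnd ℂ) (centeredSum p w S) ^ N := by
        rw [pow_mul, Complex.ofReal_pow, Complex.ofReal_pow, ← Complex.mul_conj', mul_pow]
    _ = ∏ i : Fin N ⊕ Fin N, ∑ k,
          ((if k ∈ S then 1 else 0) - (p : ℂ)) * Sum.elim (fun _ => w) (fun _ => star w) i k := by
        rw [Fintype.prod_sum_type, hconj]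
        simp [centeredSum]
    _ = _ := by
        rw [Fintype.prod_sum]
        simp_rw [prod_mul_distrib, mul_comm]

theorem sum_bernoulliWeight_mul_norm_centeredSum_pow_le {p : ℝ} (hp0 : 0 ≤ p) (hp1 : p ≤ 1)
    (hpn : 1 ≤ 2 * p * Fintype.card ι) {w : ι → ℂ} (hw : ∀ k, ‖w k‖ ≤ 1) (N : ℕ) :
    ∑ S, bernoulliWeight p S * ‖centeredSum p w S‖ ^ (2 * N) ≤
      momentBound N (2 * p * Fintype.card ι) := by
  set v := Sum.elim (fun _ : Fin N => w) (fun _ : Fin N => star w)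
  have hv (τ : Fin N ⊕ Fin N → ι) : ‖∏ i, v i (τ i)‖ ≤ 1 := by
    rw [norm_prod]
    exact prod_le_one (fun _ _ => norm_nonneg _) fun i _ => by cases i <;> simp [v, hw]
  have expectation :
      ((∑ S, bernoulliWeight p S * ‖centeredSum p w S‖ ^ (2 * N) : ℝ) : ℂ) =
        ∑ τ : Fin N ⊕ Fin N → ι,
          (∏ i, v i (τ i)) * ∏ j, ((centeredMoment p #{i | τ i = j} : ℝ) : ℂ) := by
    simp only [Complex.ofReal_sum, Complex.ofReal_mul, Complex.ofReal_bernoulliWeight,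
      ofReal_norm_centeredSum_pow, Complex.ofReal_centeredMoment]
    simp_rw [← sum_bernoulliWeight_mul_prod_sub, mul_sum]
    rw [sum_comm]
    refine sum_congr rfl fun τ _ => sum_congr rfl fun S _ => by ring
  calc ∑ S, bernoulliWeight p S * ‖centeredSum p w S‖ ^ (2 * N)
      ≤ ‖((∑ S, bernoulliWeight p S * ‖centeredSum p w S‖ ^ (2 * N) : ℝ) : ℂ)‖ := by
        rw [Complex.norm_real, Real.norm_eq_abs]
        exact le_abs_self _
    _ ≤ ∑ τ : Fin N ⊕ Fin N → ι, ∏ j, |centeredMoment p #{i | τ i = j}| := by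
        rw [expectation]
        refine (norm_sum_le _ _).trans (sum_le_sum fun τ _ => ?_)
        rw [norm_mul]
        refine (mul_le_of_le_one_left (norm_nonneg _) (hv τ)).trans_eq ?_
        simp [norm_prod]
    _ ≤ ∑ τ : Fin N ⊕ Fin N → ι,
          if #(univ.image τ) ≤ N then (2 * p) ^ #(univ.image τ) else 0 :=
        sum_le_sum fun τ _ => prod_abs_centeredMoment_card_fiber_le hp0 hp1 (by simp [two_mul]) τ
    _ ≤ momentBound N (2 * p * Fintype.card ι) := by
        simpa [momentBound, two_mul] using
          sum_ite_card_image_le (α := Fin N ⊕ Fin N) (by positivity) hpn N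

end Moment

section Selection

variable {ι : Type*} [DecidableEq ι]

theorem exists_forall_norm_centeredSum_pow_le [Fintype ι] {β : Type*} (F : Finset β) {p : ℝ}
    (hp0 : 0 < p) (hp1 : p < 1) (hpn : 1 ≤ 2 * p * Fintype.card ι) {w : β → ι → ℂ}
    (hw : ∀ b k, ‖w b k‖ ≤ 1) (N : ℕ) :
    ∃ S : Finset ι, ∀ b ∈ F, ‖centeredSum p (w b) S‖ ^ (2 * N) ≤
      #F * momentBound N (2 * p * Fintype.card ι) := by
  have average : ∑ S, bernoulliWeight p S * ∑ b ∈ F, ‖centeredSum p (w b) S‖ ^ (2 * N) ≤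
      #F * momentBound N (2 * p * Fintype.card ι) := by
    simp_rw [mul_sum]
    rw [sum_comm, ← nsmul_eq_mul]
    exact sum_le_card_nsmul _ _ _ fun b _ =>
      sum_bernoulliWeight_mul_norm_centeredSum_pow_le hp0.le hp1.le hpn (hw b) N
  obtain ⟨S, hS⟩ := exists_le_of_sum_bernoulliWeight_mul_le hp0 hp1 average
  exact ⟨S, fun b hb => (single_le_sum (fun b _ => by positivity) hb).trans hS⟩

variable {E : Type*} [SeminormedAddCommGroup E]

theorem norm_sum_sub_sum_le_of_subset {f : ι → E} (hf : ∀ k, ‖f k‖ ≤ 1) {s t : Finset ι}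
    (h : s ⊆ t) : ‖∑ k ∈ t, f k - ∑ k ∈ s, f k‖ ≤ (#t : ℝ) - #s := by
  rw [← sum_sdiff h, add_sub_cancel_right, ← Nat.cast_sub (card_le_card h),
    ← card_sdiff_of_subset h]
  refine (norm_sum_le _ _).trans ?_
  simpa using sum_le_card_nsmul _ _ _ fun k _ => hf k

theorem exists_card_eq_forall_norm_sum_le [Fintype ι] (S : Finset ι) {m : ℕ}
    (hm : m ≤ Fintype.card ι) :
    ∃ M : Finset ι, #M = m ∧ ∀ f : ι → E, (∀ k, ‖f k‖ ≤ 1) →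
      ‖∑ k ∈ M, f k‖ ≤ ‖∑ k ∈ S, f k‖ + |(#S : ℝ) - m| := by
  rcases le_total m #S with h | h
  · obtain ⟨M, hMS, hM⟩ := exists_subset_card_eq h
    refine ⟨M, hM, fun f hf => (norm_le_insert (∑ k ∈ S, f k) _).trans ?_⟩
    have := norm_sum_sub_sum_le_of_subset hf hMS
    rw [hM] at this
    linarith [le_abs_self ((#S : ℝ) - m)]
  · obtain ⟨M, hSM, hM⟩ := exists_superset_card_eq h hm
    refine ⟨M, hM, fun f hf => (norm_le_insert' _ (∑ k ∈ S, f k)).trans ?_⟩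
    have := norm_sum_sub_sum_le_of_subset hf hSM
    rw [hM] at this
    linarith [neg_abs_le ((#S : ℝ) - m)]

end Selection

section Fundamental

variable {ι : Type*} [Fintype ι] [DecidableEq ι]

theorem exists_card_eq_forall_norm_sum_pow_le {z : ι → ℂ} (hz : ∀ k, ‖z k‖ = 1) {V : ℕ} {A : ℝ}
    (hA : ∀ ν, 1 ≤ ν → ν ≤ V → ‖∑ k, z k ^ ν‖ ≤ A) {m : ℕ} (hm0 : 0 < m)
    (hmn : m < Fintype.card ι) {N : ℕ} (hN : N ≠ 0) {R : ℝ} (hR0 : 0 ≤ R)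
    (hR : (V + 1) * momentBound N (2 * m) ≤ R ^ (2 * N)) :
    ∃ M : Finset ι, #M = m ∧ ∀ ν, 1 ≤ ν → ν ≤ V →
      ‖∑ k ∈ M, z k ^ ν‖ ≤ 2 * R + m / Fintype.card ι * A := by
  set p : ℝ := m / Fintype.card ι
  have hn : (0 : ℝ) < Fintype.card ι := by exact_mod_cast hm0.trans hmn
  have hpn : p * Fintype.card ι = m := div_mul_cancel₀ _ hn.ne'
  have hp0 : 0 < p := div_pos (by exact_mod_cast hm0) hn
  have hp1 : p < 1 := (div_lt_one hn).2 (by exact_mod_cast hmn)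
  obtain ⟨S, hS⟩ := exists_forall_norm_centeredSum_pow_le (range (V + 1)) hp0 hp1
    (by rw [mul_assoc, hpn]; exact_mod_cast (by omega : 1 ≤ 2 * m))
    (w := fun ν k => z k ^ ν) (by simp [hz]) N
  have small (ν : ℕ) (hν : ν ≤ V) : ‖centeredSum p (fun k => z k ^ ν) S‖ ≤ R := by
    refine (pow_le_pow_iff_left₀ (norm_nonneg _) hR0 (by omega)).1 ((hS ν ?_).trans ?_)
    · exact mem_range.2 (Nat.lt_succ_of_le hν)
    · simpa [mul_assoc, hpn] using hR
  -- `ν = 0` is among the controlled exponents, and `z k ^ 0 = 1` counts the elements of `S`.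
  have card_dev : |(#S : ℝ) - m| ≤ R := by
    have hdev : centeredSum p (fun k => z k ^ 0) S = (((#S : ℝ) - m : ℝ) : ℂ) := by
      simp [centeredSum_eq, ← hpn]
    simpa only [hdev, Complex.norm_real, Real.norm_eq_abs] using small 0 V.zero_le
  obtain ⟨M, hM, hMS⟩ := exists_card_eq_forall_norm_sum_le (E := ℂ) S hmn.le
  refine ⟨M, hM, fun ν hν1 hνV => ?_⟩
  have hSν : ‖∑ k ∈ S, z k ^ ν‖ ≤ R + p * A := by
    have := small ν hνV
    rw [centeredSum_eq] at this
    calc ‖∑ k ∈ S, z k ^ ν‖ ≤ ‖(p : ℂ) * ∑ k, z k ^ ν‖ + ‖∑ k ∈ S, z k ^ ν - p * ∑ k, z k ^ ν‖ :=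
          norm_le_insert' _ _
      _ ≤ p * A + R := by
          rw [norm_mul, Complex.norm_real, Real.norm_of_nonneg hp0.le]
          gcongr
          exact hA ν hν1 hνV
      _ = R + p * A := add_comm _ _
  calc ‖∑ k ∈ M, z k ^ ν‖ ≤ ‖∑ k ∈ S, z k ^ ν‖ + |(#S : ℝ) - m| := hMS _ (by simp [hz])
    _ ≤ 2 * R + p * A := by linarith

end Fundamental

section Asymptotics

theorem add_one_mul_momentBound_le {α ε C : ℝ} {n m V N : ℕ} (hn : 1 ≤ n)
    (hm : 1 ≤ m) (hV : (V : ℝ) ≤ α * n ^ 2) (hnm : (n : ℝ) ^ 2 ≤ (m : ℝ) ^ (2 * N * ε))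
    (hC1 : 1 ≤ C) (hC : (α + 1) * momentBound N 2 ≤ C) (hN : N ≠ 0) :
    (V + 1) * momentBound N (2 * m) ≤ (C * (m : ℝ) ^ (1 / 2 + ε)) ^ (2 * N) := by
  have hm0 : (0 : ℝ) < m := by exact_mod_cast hm
  have hn1 : (1 : ℝ) ≤ (n : ℝ) ^ 2 := one_le_pow₀ (by exact_mod_cast hn)
  have hpow : ((m : ℝ) ^ (1 / 2 + ε)) ^ (2 * N) = (m : ℝ) ^ (2 * N * ε) * (m : ℝ) ^ N := by
    rw [← Real.rpow_natCast, ← Real.rpow_mul hm0.le, ← Real.rpow_natCast _ N,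
      ← Real.rpow_add hm0]
    push_cast
    ring_nf
  have hK : 0 ≤ momentBound N 2 := by unfold momentBound; positivity
  calc (V + 1) * momentBound N (2 * m) = (V + 1) * momentBound N 2 * (m : ℝ) ^ N := by
        simp only [momentBound, mul_pow]
        ring
    _ ≤ (α + 1) * (n : ℝ) ^ 2 * momentBound N 2 * (m : ℝ) ^ N := by
        gcongr
        nlinarith
    _ = (α + 1) * momentBound N 2 * ((n : ℝ) ^ 2 * (m : ℝ) ^ N) := by ring
    _ ≤ C ^ (2 * N) * ((m : ℝ) ^ (1 / 2 + ε)) ^ (2 * N) := by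
        rw [hpow]
        gcongr
        exact hC.trans (le_self_pow₀ hC1 (by omega))
    _ = (C * (m : ℝ) ^ (1 / 2 + ε)) ^ (2 * N) := (mul_pow _ _ _).symm

theorem sq_le_rpow_of_rpow_le_sq {x y θ e : ℝ} (hx : 0 ≤ x) (hy : 1 ≤ y) (hθ : 0 < θ)
    (hxy : x ^ θ ≤ y ^ 2) (he : 4 / θ ≤ e) : x ^ 2 ≤ y ^ e := by
  calc x ^ 2 = (x ^ θ) ^ (2 / θ) := by
        rw [← Real.rpow_mul hx, mul_div_cancel₀ _ hθ.ne', Real.rpow_two]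
    _ ≤ (y ^ 2) ^ (2 / θ) := by gcongr
    _ = y ^ (4 / θ) := by
        rw [← Real.rpow_two, ← Real.rpow_mul (by linarith)]
        ring_nf
    _ ≤ y ^ e := Real.rpow_le_rpow_of_exponent_le hy he

theorem div_mul_sqrt_le_sqrt {x y : ℝ} (hx : 0 ≤ x) (hxy : x ≤ y) : x / y * √y ≤ √x := by
  rcases (hx.trans hxy).eq_or_lt with h | hy
  · simp [← h]
  rw [Real.le_sqrt (by positivity) hx, mul_pow, Real.sq_sqrt hy.le,
    show (x / y) ^ 2 * y = x * (x / y) by field_simp]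
  exact mul_le_of_le_one_right hx ((div_le_one hy).2 hxy)

theorem eventually_pos_and_lt_and_rpow_le_sq {θ : ℝ} (hθ0 : 0 < θ) (hθ1 : θ < 1) {m : ℕ → ℕ}
    (hm : Tendsto (fun n : ℕ => (m n : ℝ) / (n : ℝ) ^ θ) atTop (nhds 1)) :
    ∀ᶠ n in atTop, 0 < m n ∧ m n < n ∧ (n : ℝ) ^ θ ≤ (m n : ℝ) ^ 2 := by
  have hpow : Tendsto (fun n : ℕ => (n : ℝ) ^ θ) atTop atTop :=
    (tendsto_rpow_atTop hθ0).comp tendsto_natCast_atTop_atTop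
  have hratio : Tendsto (fun n : ℕ => (m n : ℝ) / n) atTop (nhds 0) := by
    have := hm.mul ((tendsto_rpow_neg_atTop (sub_pos.2 hθ1)).comp tendsto_natCast_atTop_atTop)
    rw [mul_zero] at this
    refine this.congr' ((eventually_gt_atTop 0).mono fun n hn => ?_)
    have hn : (0 : ℝ) < n := by exact_mod_cast hn
    simp only [Function.comp, div_mul_eq_mul_div, mul_div_assoc, ← Real.rpow_sub hn]
    norm_num [Real.rpow_neg_one, div_eq_mul_inv]
  filter_upwards [hm.eventually_const_lt one_half_lt_one, hratio.eventually_lt_const one_pos,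
    hpow.eventually_ge_atTop 4, eventually_gt_atTop 0] with n hhalf hlt hfour hn
  have hn : (0 : ℝ) < n := by exact_mod_cast hn
  rw [lt_div_iff₀ (by positivity)] at hhalf
  rw [div_lt_one hn] at hlt
  have hm2 : (2 : ℝ) ≤ m n := by linarith
  refine ⟨by exact_mod_cast (by linarith : (0 : ℝ) < m n), by exact_mod_cast hlt, by nlinarith⟩

end Asymptotics

theorem stmt_15 (ε α θ C₁ : ℝ) (hε : 0 < ε) (hα : 0 < α) (hθ0 : 0 < θ) (hθ1 : θ < 1)
    (hC₁ : 1 ≤ C₁) (m : ℕ → ℕ)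
    (hm : Filter.Tendsto (fun n : ℕ => (m n : ℝ) / (n : ℝ) ^ θ) Filter.atTop (nhds 1)) :
    ∃ C > 0, ∃ n₀ : ℕ, ∀ n ≥ n₀, ∀ z : Fin n → ℂ, (∀ k, ‖z k‖ = 1) →
      (∀ ν : ℕ, 1 ≤ ν → ν ≤ ⌊α * (n : ℝ) ^ 2⌋₊ → ‖∑ k, z k ^ ν‖ ≤ C₁ * Real.sqrt n) →
      ∃ M₀ : Finset (Fin n), M₀.card = m n ∧
        ∀ ν : ℕ, 1 ≤ ν → ν ≤ ⌊α * (n : ℝ) ^ 2⌋₊ →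
          ‖∑ k ∈ M₀, z k ^ ν‖ ≤ C * (m n : ℝ) ^ ((1 : ℝ) / 2 + ε) := by
  obtain ⟨N, hN⟩ := exists_nat_gt (2 / (θ * ε))
  have hN0 : N ≠ 0 := by
    rintro rfl
    exact (div_pos two_pos (mul_pos hθ0 hε)).not_gt (by simpa using hN)
  set C := max 1 ((α + 1) * momentBound N 2)
  refine ⟨2 * C + C₁, by positivity, ?_⟩
  obtain ⟨n₀, hn₀⟩ := eventually_atTop.1 (eventually_pos_and_lt_and_rpow_le_sq hθ0 hθ1 hm)
  refine ⟨n₀, fun n hn z hz hzsum => ?_⟩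
  obtain ⟨hm0, hmn, hnm⟩ := hn₀ n hn
  have hm1 : (1 : ℝ) ≤ m n := by exact_mod_cast hm0
  have hnm' : (n : ℝ) ^ 2 ≤ (m n : ℝ) ^ (2 * N * ε) :=
    sq_le_rpow_of_rpow_le_sq n.cast_nonneg hm1 hθ0 hnm (by
      rw [div_le_iff₀ hθ0]
      have := (div_lt_iff₀ (mul_pos hθ0 hε)).1 hN
      nlinarith)
  obtain ⟨M, hM, hMz⟩ := exists_card_eq_forall_norm_sum_pow_le hz hzsum hm0
    (by simpa using hmn) hN0 (R := C * (m n : ℝ) ^ (1 / 2 + ε)) (by positivity)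
    (add_one_mul_momentBound_le (by omega) hm0 (Nat.floor_le (by positivity)) hnm'
      (le_max_left _ _) (le_max_right _ _) hN0)
  refine ⟨M, hM, fun ν hν1 hνV => (hMz ν hν1 hνV).trans ?_⟩
  have hsqrt : (m n : ℝ) / n * √n ≤ (m n : ℝ) ^ (1 / 2 + ε) :=
    (div_mul_sqrt_le_sqrt (by positivity) (by exact_mod_cast hmn.le)).trans
      (by rw [Real.sqrt_eq_rpow]; exact Real.rpow_le_rpow_of_exponent_le hm1 (by linarith))
  simp only [Fintype.card_fin]
  nlinarith
end

section
/- Define Δ(n) ≥ 0 by inf_{|z_k|≥1} max_{ν=1,...,n²}|∑_{k=1}^n z_k^ν| = √n + Δ(n). Assume for consecutive primes p_k ≤ n ≤ p_{k+1} that Δ(n) ≪ n^ε √(p_{k+1}−p_k) for every ε > 0, and assume ∑_{p_k ≤ X}(p_{k+1}−p_k)² ≪ X^{5/4+ε}. Then ∑_{n=1}^N |Δ(n)|² ≪ N^{5/4+ε} for every ε > 0. -/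
/-- `max_{ν = 1,...,n²} |∑_{k=1}^n z_k^ν|`. -/
noncomputable def turanMax (n : ℕ) (z : Fin n → ℂ) : ℝ :=
  (((Finset.Icc 1 (n ^ 2)).sup fun ν => ‖∑ k, z k ^ ν‖₊ : NNReal) : ℝ)

/-- `inf_{|z_k| ≥ 1} max_{ν = 1,...,n²} |∑_{k=1}^n z_k^ν|`. -/
noncomputable def turanInf (n : ℕ) : ℝ :=
  sInf {r : ℝ | ∃ z : Fin n → ℂ, (∀ k, 1 ≤ ‖z k‖) ∧ r = turanMax n z}

/-! Every `n ≥ 2` lies in exactly one gap `[p_k, p_{k+1})`, namely for `k = π(n) - 1`, so the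
pointwise bound gives `Δ(n)² ≪ N^ε (p_{k+1} - p_k)`. Each gap index `k` occurs for at most
`p_{k+1} - p_k` values of `n`, hence `∑_{n ≤ N} Δ(n)² ≪ N^ε ∑_{p_k ≤ N} (p_{k+1} - p_k)²`, and
Peck's estimate finishes the proof. The term `n = 1`, which lies in no prime gap, is absorbed
into the constant. -/

open Finset Nat
open scoped Nat.Prime

theorem Finset.sum_comp_le_sum_sq {ι κ : Type*} [DecidableEq κ] {s : Finset ι} {t : Finset κ}
    {f : ι → κ} (hf : ∀ i ∈ s, f i ∈ t) {w : κ → ℝ} (hw : ∀ k ∈ t, 0 ≤ w k)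
    (hcard : ∀ k ∈ t, (#{i ∈ s | f i = k} : ℝ) ≤ w k) :
    ∑ i ∈ s, w (f i) ≤ ∑ k ∈ t, w k ^ 2 := by
  rw [← sum_fiberwise_of_maps_to hf]
  refine sum_le_sum fun k hk => ?_
  rw [sum_congr rfl fun i hi => congrArg w (mem_filter.mp hi).2, sum_const, nsmul_eq_mul, sq]
  exact mul_le_mul_of_nonneg_right (hcard k hk) (hw k hk)

theorem Real.sq_le_mul_rpow_mul_of_le_mul_rpow_mul_sqrt {a C x X g δ : ℝ} (ha : 0 ≤ a)
    (hx : 0 ≤ x) (hxX : x ≤ X) (hg : 0 ≤ g) (hδ : 0 ≤ δ) (h : a ≤ C * x ^ δ * √g) :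
    a ^ 2 ≤ C ^ 2 * X ^ (2 * δ) * g :=
  calc a ^ 2 ≤ (C * x ^ δ * √g) ^ 2 := pow_le_pow_left₀ ha h 2
    _ = C ^ 2 * x ^ (2 * δ) * g := by
      rw [mul_pow, mul_pow, Real.sq_sqrt hg, ← Real.rpow_mul_natCast hx, mul_comm δ]
      norm_num
    _ ≤ C ^ 2 * X ^ (2 * δ) * g := by gcongr

namespace Nat

noncomputable def primeGap (k : ℕ) : ℕ := nth Prime (k + 1) - nth Prime k

theorem primeCounting_pos {n : ℕ} (hn : 2 ≤ n) : 0 < π n :=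
  Nat.pos_of_ne_zero (by simp only [ne_eq, primeCounting_eq_zero_iff]; omega)

theorem nth_prime_primeCounting_sub_one_le {n : ℕ} (hn : 2 ≤ n) : nth Prime (π n - 1) ≤ n :=
  Nat.lt_succ_iff.mp (nth_lt_of_lt_count (Nat.sub_lt (primeCounting_pos hn) one_pos))

theorem lt_nth_prime_primeCounting (n : ℕ) : n < nth Prime (π n) :=
  (count_le_iff_le_nth infinite_setOfPred_prime).mp le_rfl

theorem primeCounting_sub_one_add_two_le {n : ℕ} (hn : 2 ≤ n) : π n - 1 + 2 ≤ n :=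
  (add_two_le_nth_prime _).trans (nth_prime_primeCounting_sub_one_le hn)

theorem mem_Ico_nth_prime_primeCounting_sub_one {n : ℕ} (hn : 2 ≤ n) :
    n ∈ Ico (nth Prime (π n - 1)) (nth Prime (π n - 1 + 1)) := by
  rw [mem_Ico, Nat.sub_add_cancel (primeCounting_pos hn)]
  exact ⟨nth_prime_primeCounting_sub_one_le hn, lt_nth_prime_primeCounting n⟩

theorem card_filter_primeCounting_sub_one_eq_le (N k : ℕ) :
    #{n ∈ Icc 2 N | π n - 1 = k} ≤ primeGap k := by
  calc #{n ∈ Icc 2 N | π n - 1 = k}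
      ≤ #(Ico (nth Prime k) (nth Prime (k + 1))) := card_le_card fun n hn => by
        obtain ⟨hmem, rfl⟩ := mem_filter.mp hn
        exact mem_Ico_nth_prime_primeCounting_sub_one (mem_Icc.mp hmem).1
    _ = primeGap k := Nat.card_Ico _ _

theorem sum_primeGap_primeCounting_sub_one_le (N : ℕ) :
    ∑ n ∈ Icc 2 N, (primeGap (π n - 1) : ℝ) ≤
      ∑ k ∈ (range N).filter (fun k => nth Prime k ≤ N), (primeGap k : ℝ) ^ 2 := by
  refine sum_comp_le_sum_sq (fun n hn => ?_) (fun k _ => Nat.cast_nonneg _)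
    (fun k _ => by exact_mod_cast card_filter_primeCounting_sub_one_eq_le N k)
  obtain ⟨h2n, hnN⟩ := mem_Icc.mp hn
  have := primeCounting_sub_one_add_two_le h2n
  exact mem_filter.mpr
    ⟨mem_range.mpr (by omega), (nth_prime_primeCounting_sub_one_le h2n).trans hnN⟩

theorem sum_Icc_two_sq_le_of_le_mul_rpow_mul_sqrt_primeGap {Δ : ℕ → ℝ} (hΔ0 : ∀ n, 0 ≤ Δ n)
    {C δ : ℝ} (hδ : 0 ≤ δ) (h : ∀ n k : ℕ, nth Prime k ≤ n → n ≤ nth Prime (k + 1) →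
      Δ n ≤ C * (n : ℝ) ^ δ * √(primeGap k)) (N : ℕ) :
    ∑ n ∈ Icc 2 N, Δ n ^ 2 ≤ C ^ 2 * (N : ℝ) ^ (2 * δ) *
      ∑ k ∈ (range N).filter (fun k => nth Prime k ≤ N), (primeGap k : ℝ) ^ 2 := by
  calc ∑ n ∈ Icc 2 N, Δ n ^ 2
      ≤ ∑ n ∈ Icc 2 N, C ^ 2 * (N : ℝ) ^ (2 * δ) * primeGap (π n - 1) := by
        refine sum_le_sum fun n hn => ?_
        obtain ⟨h2n, hnN⟩ := mem_Icc.mp hn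
        obtain ⟨hlo, hhi⟩ := mem_Ico.mp (mem_Ico_nth_prime_primeCounting_sub_one h2n)
        exact Real.sq_le_mul_rpow_mul_of_le_mul_rpow_mul_sqrt (hΔ0 n) n.cast_nonneg
          (by exact_mod_cast hnN) (Nat.cast_nonneg _) hδ (h n _ hlo hhi.le)
    _ ≤ _ := by
      rw [← mul_sum]
      gcongr
      exact sum_primeGap_primeCounting_sub_one_le N

end Nat

open scoped Classical in
theorem stmt_18_general (Δ : ℕ → ℝ) (hΔ0 : ∀ n, 0 ≤ Δ n)
    (hpointwise : ∀ ε : ℝ, 0 < ε → ∃ C > 0, ∀ n k : ℕ,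
      Nat.nth Nat.Prime k ≤ n → n ≤ Nat.nth Nat.Prime (k + 1) →
      Δ n ≤ C * (n : ℝ) ^ ε *
        Real.sqrt ((Nat.nth Nat.Prime (k + 1) - Nat.nth Nat.Prime k : ℕ)))
    (hpeck : ∀ ε : ℝ, 0 < ε → ∃ C > 0, ∀ X : ℕ,
      ∑ k ∈ (Finset.range X).filter (fun k => Nat.nth Nat.Prime k ≤ X),
        ((Nat.nth Nat.Prime (k + 1) - Nat.nth Nat.Prime k : ℕ) : ℝ) ^ 2 ≤
          C * (X : ℝ) ^ ((5 : ℝ) / 4 + ε)) :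
    ∀ ε : ℝ, 0 < ε → ∃ C > 0, ∀ N : ℕ,
      ∑ n ∈ Finset.Icc 1 N, (Δ n) ^ 2 ≤ C * (N : ℝ) ^ ((5 : ℝ) / 4 + ε) := by
  intro ε hε
  obtain ⟨C₁, hC₁, hpt⟩ := hpointwise (ε / 4) (by positivity)
  obtain ⟨C₂, hC₂, hgap⟩ := hpeck (ε / 2) (by positivity)
  refine ⟨Δ 1 ^ 2 + C₁ ^ 2 * C₂, by positivity, fun N => ?_⟩
  rcases N.eq_zero_or_pos with rfl | hN
  · simp [Real.zero_rpow (by positivity : (5 : ℝ) / 4 + ε ≠ 0)]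
  have hN1 : (1 : ℝ) ≤ N := by exact_mod_cast hN
  have htail : ∑ n ∈ Icc 2 N, Δ n ^ 2 ≤ C₁ ^ 2 * C₂ * (N : ℝ) ^ ((5 : ℝ) / 4 + ε) :=
    calc ∑ n ∈ Icc 2 N, Δ n ^ 2
        ≤ C₁ ^ 2 * (N : ℝ) ^ (2 * (ε / 4)) * (C₂ * (N : ℝ) ^ ((5 : ℝ) / 4 + ε / 2)) :=
          (sum_Icc_two_sq_le_of_le_mul_rpow_mul_sqrt_primeGap hΔ0 (by positivity) hpt N).trans
            (by gcongr; exact hgap N)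
      _ = C₁ ^ 2 * C₂ * (N : ℝ) ^ ((5 : ℝ) / 4 + ε) := by
          rw [mul_mul_mul_comm, ← Real.rpow_add (by positivity)]; ring_nf
  have hΔ1 : Δ 1 ^ 2 ≤ Δ 1 ^ 2 * (N : ℝ) ^ ((5 : ℝ) / 4 + ε) :=
    le_mul_of_one_le_right (sq_nonneg _) (Real.one_le_rpow hN1 (by positivity))
  rw [← insert_Icc_add_one_left_eq_Icc hN, sum_insert (by simp)]
  linarith

open scoped Classical in
theorem stmt_18 (Δ : ℕ → ℝ) (hΔ0 : ∀ n, 0 ≤ Δ n)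
    (hΔ : ∀ n : ℕ, turanInf n = Real.sqrt n + Δ n)
    (hpointwise : ∀ ε : ℝ, 0 < ε → ∃ C > 0, ∀ n k : ℕ,
      Nat.nth Nat.Prime k ≤ n → n ≤ Nat.nth Nat.Prime (k + 1) →
      Δ n ≤ C * (n : ℝ) ^ ε *
        Real.sqrt ((Nat.nth Nat.Prime (k + 1) - Nat.nth Nat.Prime k : ℕ)))
    (hpeck : ∀ ε : ℝ, 0 < ε → ∃ C > 0, ∀ X : ℕ,
      ∑ k ∈ (Finset.range X).filter (fun k => Nat.nth Nat.Prime k ≤ X),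
        ((Nat.nth Nat.Prime (k + 1) - Nat.nth Nat.Prime k : ℕ) : ℝ) ^ 2 ≤
          C * (X : ℝ) ^ ((5 : ℝ) / 4 + ε)) :
    ∀ ε : ℝ, 0 < ε → ∃ C > 0, ∀ N : ℕ,
      ∑ n ∈ Finset.Icc 1 N, (Δ n) ^ 2 ≤ C * (N : ℝ) ^ ((5 : ℝ) / 4 + ε) :=
  stmt_18_general Δ hΔ0 hpointwise hpeck
end
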